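/- arXiv:1309.2649 — 2 statements merged into one kernel-verified Lean document; each statement's English description precedes it below -/
import Mathlib

section
/- Suppose Re ⟨w, B(s) w⟩ ≥ γ ‖R(s) w‖² for all w ∈ V and all s with Re s ≥ σ. Let Δt > 0 and let ρ ∈ (0,1) be such that Re δ(ζ) ≥ σ Δt for all |ζ| ≤ ρ, where δ(ζ) = (1−ζ) + (1−ζ)²/2. Let the convolution quadrature weight operators B_n : V → V' and R_n : V → V be defined by the power series B(δ(ζ)/Δt) = Σ_{n≥0} B_n ζ^n and R(δ(ζ)/Δt) = Σ_{n≥0} R_n ζ^n. Then for every finitely supported function w : ℕ → V one has Σ_{n≥0} ρ^{2n} Re ⟨w(n), Σ_{j=0}^n B_{n−j} w(j)⟩ ≥ γ Σ_{n≥0} ρ^{2n} ‖Σ_{j=0}^n R_{n−j} w(j)‖². -/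
/-!
Write `X(ζ) = ∑ wₙ ζⁿ`. By the Cauchy product, the generating function of the convolution
`(B ∗ w)ₙ = ∑_{j ≤ n} B_{n-j} w_j` is `B(δ(ζ)/Δt) X(ζ)`, and likewise for `R`. On a circle
`|ζ| = r < ρ` all these series converge absolutely, so Parseval's identity turns
`∑ r^{2n} Re ⟨wₙ, (B ∗ w)ₙ⟩` and `∑ r^{2n} ‖(R ∗ w)ₙ‖²` into the circle averages of
`Re ⟨X, B(δ/Δt) X⟩` and `‖R(δ/Δt) X‖²`, which are compared pointwise because `Re δ(ζ)/Δt ≥ σ`.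
Since `w` is finitely supported, the right-hand side is a polynomial in `r`, and letting
`r → ρ⁻` in the partial sums on the left gives the inequality at radius `ρ`.
-/

/-- The generating function of the second-order backward difference formula (BDF2). -/
noncomputable def bdf2 (ζ : ℂ) : ℂ := (1 - ζ) + (1 - ζ) ^ 2 / 2

open Complex ComplexConjugate Real Finset Filter Topology
open scoped InnerProductSpace

theorem HasSum.sum_antidiagonal {A E : Type*} [AddCommMonoid A] [HasAntidiagonal A]
    [AddCommMonoid E] [TopologicalSpace E] [ContinuousAdd E] [RegularSpace E]
    {f : A × A → E} {a : E} (h : HasSum f a) :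
    HasSum (fun n => ∑ p ∈ antidiagonal n, f p) a :=
  (HasAntidiagonal.sigmaAntidiagonalEquivProd.hasSum_iff.2 h).sigma fun n => by
    simpa [Finset.sum_attach] using hasSum_fintype fun p : antidiagonal n => f p

section Bilinear

variable {𝕜 𝕜₂ 𝕜₃ E F G ι κ : Type*} [NontriviallyNormedField 𝕜] [NontriviallyNormedField 𝕜₂]
  [NontriviallyNormedField 𝕜₃] [NormedAddCommGroup E] [NormedAddCommGroup F]
  [NormedAddCommGroup G] [NormedSpace 𝕜 E] [NormedSpace 𝕜₂ F] [NormedSpace 𝕜₃ G] [CompleteSpace G]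
  {σ₁₃ : 𝕜 →+* 𝕜₃} {σ₂₃ : 𝕜₂ →+* 𝕜₃} [RingHomIsometric σ₁₃] [RingHomIsometric σ₂₃]

theorem ContinuousLinearMap.hasSum_prod_of_summable_norm (L : E →SL[σ₁₃] F →SL[σ₂₃] G)
    {f : ι → E} {g : κ → F} {x : E} {y : F} (hf : Summable fun i => ‖f i‖)
    (hg : Summable fun k => ‖g k‖) (hx : HasSum f x) (hy : HasSum g y) :
    HasSum (fun p : ι × κ => L (f p.1) (g p.2)) (L x y) := by
  obtain ⟨t, ht⟩ : Summable fun p : ι × κ => L (f p.1) (g p.2) :=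
    .of_norm_bounded
      ((hf.mul_of_nonneg hg (fun _ => norm_nonneg _) fun _ => norm_nonneg _).mul_left ‖L‖)
      fun p => (L.le_opNorm₂ _ _).trans_eq (mul_assoc _ _ _)
  have hrows : HasSum (fun i => L (f i) y) t := ht.prod_fiberwise fun i => (L (f i)).hasSum hy
  have hcol : HasSum (fun i => L (f i) y) (L x y) := by
    simpa using (L.hasSum hx).mapL (ContinuousLinearMap.apply' G σ₂₃ y)
  rwa [hrows.unique hcol] at ht

end Bilinear

section Convolution

variable {𝕜 E F : Type*} [NontriviallyNormedField 𝕜] [NormedAddCommGroup E] [NormedAddCommGroup F]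
  [NormedSpace 𝕜 E] [NormedSpace 𝕜 F]

def discreteConvolution (U : ℕ → E →L[𝕜] F) (w : ℕ → E) (n : ℕ) : F :=
  ∑ j ∈ range (n + 1), U (n - j) (w j)

theorem discreteConvolution_eq_sum_antidiagonal (U : ℕ → E →L[𝕜] F) (w : ℕ → E) (n : ℕ) :
    discreteConvolution U w n = ∑ p ∈ antidiagonal n, U p.1 (w p.2) := by
  rw [← Nat.sum_antidiagonal_swap]
  exact (Nat.sum_antidiagonal_eq_sum_range_succ (fun i j => U j (w i)) n).symm

theorem summable_pow_mul_norm_discreteConvolution {U : ℕ → E →L[𝕜] F} {w : ℕ → E} {r : ℝ}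
    (hr : 0 ≤ r) (hU : Summable fun n => r ^ n * ‖U n‖) (hw : Summable fun n => r ^ n * ‖w n‖) :
    Summable fun n => r ^ n * ‖discreteConvolution U w n‖ := by
  have hprod := summable_sum_mul_antidiagonal_of_summable_mul
    (f := fun n => r ^ n * ‖U n‖) (g := fun n => r ^ n * ‖w n‖)
    (hU.mul_of_nonneg hw (fun n => by positivity) fun n => by positivity)
  refine .of_nonneg_of_le (fun n => by positivity) (fun n => ?_) hprod
  calc r ^ n * ‖discreteConvolution U w n‖
      ≤ ∑ p ∈ antidiagonal n, r ^ n * (‖U p.1‖ * ‖w p.2‖) := by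
        rw [discreteConvolution_eq_sum_antidiagonal, ← mul_sum]
        gcongr
        exact (norm_sum_le _ _).trans (sum_le_sum fun p _ => (U p.1).le_opNorm _)
    _ = ∑ p ∈ antidiagonal n, r ^ p.1 * ‖U p.1‖ * (r ^ p.2 * ‖w p.2‖) := by
        refine sum_congr rfl fun p hp => ?_
        rw [← mem_antidiagonal.1 hp, pow_add]
        ring

theorem hasSum_pow_smul_discreteConvolution [CompleteSpace E] [CompleteSpace F]
    {U : ℕ → E →L[𝕜] F} {w : ℕ → E} {ζ : 𝕜} (hU : Summable fun n => ‖ζ‖ ^ n * ‖U n‖)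
    (hw : Summable fun n => ‖ζ‖ ^ n * ‖w n‖) :
    HasSum (fun n => ζ ^ n • discreteConvolution U w n)
      ((∑' n, ζ ^ n • U n) (∑' n, ζ ^ n • w n)) := by
  simp only [← norm_pow, ← norm_smul] at hU hw
  have hprod := (ContinuousLinearMap.id 𝕜 (E →L[𝕜] F)).hasSum_prod_of_summable_norm hU hw
    hU.of_norm.hasSum hw.of_norm.hasSum
  refine hprod.sum_antidiagonal.congr_fun fun n => ?_
  rw [discreteConvolution_eq_sum_antidiagonal, smul_sum]
  refine sum_congr rfl fun p hp => ?_
  rw [← mem_antidiagonal.1 hp]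
  simp [pow_add, smul_smul, mul_comm]

end Convolution

theorem summable_pow_mul_norm_of_summable_pow_smul {𝕜 E : Type*} [NormedField 𝕜]
    [SeminormedAddCommGroup E] [NormedSpace 𝕜 E] {u : ℕ → E} {z : 𝕜} {r : ℝ}
    (h : Summable fun n => z ^ n • u n) (hr0 : 0 ≤ r) (hr : r < ‖z‖) :
    Summable fun n => r ^ n * ‖u n‖ := by
  obtain ⟨C, hC⟩ := h.tendsto_atTop_zero.norm.bddAbove_range
  have hz : 0 < ‖z‖ := hr0.trans_lt hr
  refine .of_nonneg_of_le (fun n => by positivity) (fun n => ?_)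
    ((summable_geometric_of_lt_one (by positivity) ((div_lt_one hz).2 hr)).mul_left C)
  calc r ^ n * ‖u n‖ = (r / ‖z‖) ^ n * ‖z ^ n • u n‖ := by
        rw [norm_smul, norm_pow, div_pow]; field_simp
    _ ≤ (r / ‖z‖) ^ n * C := by gcongr; exact hC ⟨n, by simp⟩
    _ = C * (r / ‖z‖) ^ n := mul_comm _ _

theorem integral_conj_circleMap_pow_mul_pow (r : ℝ) (m n : ℕ) :
    ∫ θ in 0..2 * π, conj (circleMap 0 r θ) ^ m * circleMap 0 r θ ^ n =
      if m = n then 2 * π * (r : ℂ) ^ (2 * m) else 0 := by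
  have hexp : ∀ θ : ℝ, conj (circleMap 0 r θ) ^ m * circleMap 0 r θ ^ n =
      (r : ℂ) ^ (m + n) * exp (((n - m : ℤ) * I) * θ) := by
    intro θ
    rw [conj_circleMap_zero, circleMap_zero_pow, circleMap_zero_pow, circleMap_zero_mul,
      circleMap_zero, pow_add]
    push_cast
    ring_nf
  simp_rw [hexp, intervalIntegral.integral_const_mul]
  split_ifs with h
  · subst h
    simp only [sub_self, Int.cast_zero, zero_mul, Complex.exp_zero, mul_one, two_mul,
      intervalIntegral.integral_const, sub_zero, real_smul, ofReal_add]
    ring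
  · have hc : ((n - m : ℤ) * I : ℂ) ≠ 0 :=
      mul_ne_zero (Int.cast_ne_zero.2 (sub_ne_zero.2 (Ne.symm (by exact_mod_cast h)))) I_ne_zero
    rw [integral_exp_mul_complex hc]
    have hperiod : exp ((n - m : ℤ) * I * ↑(2 * π)) = 1 := by
      rw [← exp_int_mul_two_pi_mul_I (n - m)]; push_cast; ring_nf
    rw [hperiod]
    simp

section Parseval

variable {E : Type*} [NormedAddCommGroup E] [InnerProductSpace ℂ E] [CompleteSpace E] {r : ℝ}

theorem hasSum_inner_tsum_pow_smul {u v : ℕ → E} {ζ : ℂ}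
    (hu : Summable fun n => ‖ζ‖ ^ n * ‖u n‖) (hv : Summable fun n => ‖ζ‖ ^ n * ‖v n‖) :
    HasSum (fun p : ℕ × ℕ => conj ζ ^ p.1 * ζ ^ p.2 * ⟪u p.1, v p.2⟫_ℂ)
      ⟪∑' n, ζ ^ n • u n, ∑' n, ζ ^ n • v n⟫_ℂ := by
  simp only [← norm_pow, ← norm_smul] at hu hv
  refine ((innerSL ℂ).hasSum_prod_of_summable_norm hu hv hu.of_norm.hasSum
    hv.of_norm.hasSum).congr_fun fun p => ?_
  simp only [innerSL_apply_apply, inner_smul_left, inner_smul_right, map_pow]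
  ring

theorem continuous_tsum_circleMap_pow_smul {u : ℕ → E} (hr : 0 ≤ r)
    (hu : Summable fun n => r ^ n * ‖u n‖) :
    Continuous fun θ => ∑' n, circleMap 0 r θ ^ n • u n :=
  continuous_tsum (fun n => ((continuous_circleMap 0 r).pow n).smul continuous_const) hu
    fun n θ => by simp [norm_smul, abs_of_nonneg hr]

theorem hasSum_integral_inner_tsum_circleMap {u v : ℕ → E} (hr : 0 ≤ r)
    (hu : Summable fun n => r ^ n * ‖u n‖) (hv : Summable fun n => r ^ n * ‖v n‖) :
    HasSum (fun n => 2 * π * (r : ℂ) ^ (2 * n) * ⟪u n, v n⟫_ℂ)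
      (∫ θ in 0..2 * π,
        ⟪∑' n, circleMap 0 r θ ^ n • u n, ∑' n, circleMap 0 r θ ^ n • v n⟫_ℂ) := by
  set F : ℕ × ℕ → ℝ → ℂ := fun p θ =>
    conj (circleMap 0 r θ) ^ p.1 * circleMap 0 r θ ^ p.2 * ⟪u p.1, v p.2⟫_ℂ
  have hF : ∀ θ, HasSum (fun p => F p θ)
      ⟪∑' n, circleMap 0 r θ ^ n • u n, ∑' n, circleMap 0 r θ ^ n • v n⟫_ℂ := fun θ =>
    hasSum_inner_tsum_pow_smul (by simpa [abs_of_nonneg hr] using hu)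
      (by simpa [abs_of_nonneg hr] using hv)
  have hinterchange := intervalIntegral.hasSum_integral_of_dominated_convergence
    (a := 0) (b := 2 * π)
    (fun p _ => r ^ p.1 * ‖u p.1‖ * (r ^ p.2 * ‖v p.2‖)) (F := F) (μ := MeasureTheory.volume)
    (fun p => (by fun_prop : Continuous (F p)).aestronglyMeasurable)
    (fun p => .of_forall fun θ _ => by
      simp only [F, norm_mul, norm_pow, RCLike.norm_conj, norm_circleMap_zero, abs_of_nonneg hr]
      calc _ ≤ r ^ p.1 * r ^ p.2 * (‖u p.1‖ * ‖v p.2‖) := by gcongr; exact norm_inner_le_norm _ _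
        _ = _ := by ring)
    (.of_forall fun _ _ => hu.mul_of_nonneg hv (fun n => by positivity) fun n => by positivity)
    intervalIntegrable_const (.of_forall fun θ _ => hF θ)
  have hdiag : ∀ p : ℕ × ℕ, ∫ θ in 0..2 * π, F p θ =
      if p.1 = p.2 then 2 * π * (r : ℂ) ^ (2 * p.1) * ⟪u p.1, v p.1⟫_ℂ else 0 := by
    intro p
    simp only [F, intervalIntegral.integral_mul_const, integral_conj_circleMap_pow_mul_pow]
    split_ifs with h <;> simp [h]
  simp only [hdiag] at hinterchange
  simpa [Function.comp_def] using (Function.Injective.hasSum_iff (g := fun n => (n, n))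
    (fun _ _ h => congrArg Prod.fst h) fun p hp => if_neg fun h => hp ⟨p.1, Prod.ext rfl h⟩).2
      hinterchange

theorem hasSum_pow_mul_re_inner_circleMap {u v : ℕ → E} (hr : 0 ≤ r)
    (hu : Summable fun n => r ^ n * ‖u n‖) (hv : Summable fun n => r ^ n * ‖v n‖) :
    HasSum (fun n => r ^ (2 * n) * re ⟪u n, v n⟫_ℂ) ((2 * π)⁻¹ * ∫ θ in 0..2 * π,
        re ⟪∑' n, circleMap 0 r θ ^ n • u n, ∑' n, circleMap 0 r θ ^ n • v n⟫_ℂ) := by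
  have hintegrable := ((continuous_tsum_circleMap_pow_smul hr hu).inner (𝕜 := ℂ)
    (continuous_tsum_circleMap_pow_smul hr hv)).intervalIntegrable
      (μ := MeasureTheory.volume) 0 (2 * π)
  have h := (reCLM.hasSum (hasSum_integral_inner_tsum_circleMap hr hu hv)).mul_left (2 * π)⁻¹
  rw [← reCLM.intervalIntegral_comp_comm hintegrable] at h
  refine h.congr_fun fun n => ?_
  simp only [reCLM_apply, ← ofReal_pow, ← ofReal_ofNat, ← ofReal_mul, re_ofReal_mul]
  field_simp

theorem mul_tsum_pow_mul_norm_sq_le_of_circleMap {γ : ℝ} {w T S : ℕ → E} (hr : 0 ≤ r)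
    (hw : Summable fun n => r ^ n * ‖w n‖) (hT : Summable fun n => r ^ n * ‖T n‖)
    (hS : Summable fun n => r ^ n * ‖S n‖)
    (h : ∀ θ, γ * ‖∑' n, circleMap 0 r θ ^ n • S n‖ ^ 2 ≤
      re ⟪∑' n, circleMap 0 r θ ^ n • w n, ∑' n, circleMap 0 r θ ^ n • T n⟫_ℂ) :
    γ * ∑' n, r ^ (2 * n) * ‖S n‖ ^ 2 ≤ ∑' n, r ^ (2 * n) * re ⟪w n, T n⟫_ℂ := by
  have hSS := hasSum_pow_mul_re_inner_circleMap hr hS hS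
  simp only [← RCLike.re_to_complex, inner_self_eq_norm_sq] at hSS
  have hG := continuous_tsum_circleMap_pow_smul hr hS
  have hXY := (continuous_tsum_circleMap_pow_smul hr hw).inner (𝕜 := ℂ)
    (continuous_tsum_circleMap_pow_smul hr hT)
  calc γ * ∑' n, r ^ (2 * n) * ‖S n‖ ^ 2
      = (2 * π)⁻¹ * ∫ θ in 0..2 * π, γ * ‖∑' n, circleMap 0 r θ ^ n • S n‖ ^ 2 := by
        rw [hSS.tsum_eq, intervalIntegral.integral_const_mul]; ring
    _ ≤ (2 * π)⁻¹ * ∫ θ in 0..2 * π,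
          re ⟪∑' n, circleMap 0 r θ ^ n • w n, ∑' n, circleMap 0 r θ ^ n • T n⟫_ℂ := by
        gcongr
        exact intervalIntegral.integral_mono_on (by positivity)
          ((continuous_const.mul (hG.norm.pow 2)).intervalIntegrable _ _)
          ((continuous_re.comp hXY).intervalIntegrable _ _) fun θ _ => h θ
    _ = ∑' n, r ^ (2 * n) * re ⟪w n, T n⟫_ℂ :=
        (hasSum_pow_mul_re_inner_circleMap hr hw hT).tsum_eq.symm

theorem mul_tsum_pow_mul_norm_discreteConvolution_sq_le {γ : ℝ} {U K : ℕ → E →L[ℂ] E}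
    {w : ℕ → E} (hr : 0 ≤ r) (hU : Summable fun n => r ^ n * ‖U n‖)
    (hK : Summable fun n => r ^ n * ‖K n‖) (hw : Summable fun n => r ^ n * ‖w n‖)
    (hpos : ∀ ζ : ℂ, ‖ζ‖ = r → ∀ x,
      γ * ‖(∑' n, ζ ^ n • K n) x‖ ^ 2 ≤ re ⟪x, (∑' n, ζ ^ n • U n) x⟫_ℂ) :
    γ * ∑' n, r ^ (2 * n) * ‖discreteConvolution K w n‖ ^ 2 ≤
      ∑' n, r ^ (2 * n) * re ⟪w n, discreteConvolution U w n⟫_ℂ := by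
  refine mul_tsum_pow_mul_norm_sq_le_of_circleMap hr hw
    (summable_pow_mul_norm_discreteConvolution hr hU hw)
    (summable_pow_mul_norm_discreteConvolution hr hK hw) fun θ => ?_
  have hζ : ‖circleMap 0 r θ‖ = r := by simp [hr]
  rw [(hasSum_pow_smul_discreteConvolution (by rwa [hζ]) (by rwa [hζ])).tsum_eq,
    (hasSum_pow_smul_discreteConvolution (by rwa [hζ]) (by rwa [hζ])).tsum_eq]
  exact hpos _ hζ _

end Parseval

theorem tsum_le_of_tendsto_sum_range_le {l : Filter ℝ} [l.NeBot] {f : ℕ → ℝ → ℝ} {a : ℕ → ℝ}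
    {p : ℝ → ℝ} {c : ℝ} (hf : ∀ n, Tendsto (f n) l (𝓝 (a n))) (hp : Tendsto p l (𝓝 c))
    (ha : ∀ n, 0 ≤ a n) (h : ∀ᶠ x in l, ∀ K, ∑ n ∈ range K, f n x ≤ p x) :
    ∑' n, a n ≤ c :=
  Real.tsum_le_of_sum_range_le ha fun K =>
    le_of_tendsto_of_tendsto (tendsto_finsetSum _ fun n _ => hf n) hp (h.mono fun _ hx => hx K)

theorem Summable.pow_two_mul_mul_sq {r : ℝ} {x : ℕ → ℝ} (hr : 0 ≤ r) (hx : ∀ n, 0 ≤ x n)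
    (h : Summable fun n => r ^ n * x n) : Summable fun n => r ^ (2 * n) * x n ^ 2 :=
  ((h.mul_of_nonneg h (fun n => mul_nonneg (pow_nonneg hr n) (hx n))
    fun n => mul_nonneg (pow_nonneg hr n) (hx n)).comp_injective
      (fun _ _ h => congrArg Prod.fst h : Function.Injective fun n : ℕ => (n, n))).congr
    fun n => by simp only [Function.comp_apply]; ring

theorem mul_tsum_pow_mul_le_of_forall_lt {γ ρ : ℝ} (hγ : 0 ≤ γ) (hρ : 0 < ρ) {a b : ℕ → ℝ}
    {N : ℕ} (ha : ∀ n, 0 ≤ a n) (hb : ∀ n, N ≤ n → b n = 0)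
    (hsum : ∀ r ∈ Set.Ioo 0 ρ, Summable fun n => r ^ (2 * n) * a n)
    (h : ∀ r ∈ Set.Ioo 0 ρ, γ * ∑' n, r ^ (2 * n) * a n ≤ ∑' n, r ^ (2 * n) * b n) :
    γ * ∑' n, ρ ^ (2 * n) * a n ≤ ∑' n, ρ ^ (2 * n) * b n := by
  have hfin (r : ℝ) : ∑' n, r ^ (2 * n) * b n = ∑ n ∈ range N, r ^ (2 * n) * b n :=
    tsum_eq_sum fun n hn => by simp [hb n (by simpa using hn)]
  rw [← tsum_mul_left, hfin]
  refine tsum_le_of_tendsto_sum_range_le (l := 𝓝[<] ρ)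
    (fun n => ((by fun_prop : Continuous fun r : ℝ => γ * (r ^ (2 * n) * a n)).tendsto ρ).mono_left
      nhdsWithin_le_nhds)
    (((by fun_prop : Continuous fun r : ℝ => ∑ n ∈ range N, r ^ (2 * n) * b n).tendsto ρ).mono_left
      nhdsWithin_le_nhds)
    (fun n => mul_nonneg hγ (mul_nonneg (pow_nonneg hρ.le _) (ha n))) ?_
  filter_upwards [Ioo_mem_nhdsLT hρ] with r hr K
  rw [← mul_sum, ← hfin]
  calc γ * ∑ n ∈ range K, r ^ (2 * n) * a n ≤ γ * ∑' n, r ^ (2 * n) * a n := by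
        gcongr
        exact (hsum r hr).sum_le_tsum _ fun n _ => mul_nonneg (pow_nonneg hr.1.le _) (ha n)
    _ ≤ _ := h r hr

theorem convolution_quadrature_preserves_positivity_general
    {V : Type*} [NormedAddCommGroup V] [InnerProductSpace ℂ V] [CompleteSpace V]
    (σ γ : ℝ) (hγ : 0 ≤ γ)
    (Bop Rop : ℂ → (V →L[ℂ] V))
    (hpos : ∀ (w : V) (s : ℂ), σ ≤ s.re →
        γ * ‖Rop s w‖ ^ 2 ≤ (inner ℂ w (Bop s w) : ℂ).re)
    (Δt : ℝ) (hΔt : 0 < Δt)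
    (ρ : ℝ) (hρ0 : 0 < ρ)
    (hρδ : ∀ ζ : ℂ, ‖ζ‖ ≤ ρ → σ * Δt ≤ (bdf2 ζ).re)
    (B R : ℕ → (V →L[ℂ] V))
    (hBw : ∀ ζ : ℂ, ‖ζ‖ ≤ ρ → HasSum (fun n => ζ ^ n • B n) (Bop (bdf2 ζ / Δt)))
    (hRw : ∀ ζ : ℂ, ‖ζ‖ ≤ ρ → HasSum (fun n => ζ ^ n • R n) (Rop (bdf2 ζ / Δt))) :
    ∀ w : ℕ → V, (∃ N : ℕ, ∀ n, N ≤ n → w n = 0) →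
      γ * ∑' n : ℕ, ρ ^ (2 * n) *
          ‖∑ j ∈ Finset.range (n + 1), R (n - j) (w j)‖ ^ 2 ≤
        ∑' n : ℕ, ρ ^ (2 * n) *
          (inner ℂ (w n) (∑ j ∈ Finset.range (n + 1), B (n - j) (w j)) : ℂ).re := by
  rintro w ⟨N, hN⟩
  have hw (r : ℝ) : Summable fun n => r ^ n * ‖w n‖ :=
    summable_of_ne_finset_zero (s := range N) fun n hn => by simp [hN n (by simpa using hn)]
  have hρ : ‖(ρ : ℂ)‖ ≤ ρ := by simp [abs_of_pos hρ0]
  have hcoef {U : ℕ → V →L[ℂ] V} {A : V →L[ℂ] V} (hU : HasSum (fun n => (ρ : ℂ) ^ n • U n) A)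
      (r : ℝ) (hr : r ∈ Set.Ioo 0 ρ) : Summable fun n => r ^ n * ‖U n‖ :=
    summable_pow_mul_norm_of_summable_pow_smul hU.summable hr.1.le
      (by simpa [abs_of_pos hρ0] using hr.2)
  refine mul_tsum_pow_mul_le_of_forall_lt (N := N) hγ hρ0 (fun n => by positivity)
    (fun n hn => by simp [hN n hn])
    (fun r hr => Summable.pow_two_mul_mul_sq hr.1.le (fun n => norm_nonneg _)
      (summable_pow_mul_norm_discreteConvolution hr.1.le (hcoef (hRw ρ hρ) r hr) (hw r)))
    fun r hr => mul_tsum_pow_mul_norm_discreteConvolution_sq_le hr.1.le (hcoef (hBw ρ hρ) r hr)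
      (hcoef (hRw ρ hρ) r hr) (hw r) fun ζ hζ x => ?_
  have hζρ : ‖ζ‖ ≤ ρ := hζ.trans_le hr.2.le
  rw [(hBw ζ hζρ).tsum_eq, (hRw ζ hζρ).tsum_eq]
  exact hpos x _ (by rw [div_ofReal_re, le_div_iff₀ hΔt]; exact hρδ ζ hζρ)

/-- convolution quadrature (BDF2) preserves the positivity of the
operator families.

`V` is a complex Hilbert space; via the Riesz identification the anti-duality
pairing `⟨w, B(s) w⟩` is the inner product `⟪w, B(s) w⟫`.  `B(s), R(s)` are
analytic families of bounded operators on `Re s ≥ σ` with bound `M |s|^μ`, and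
`Re ⟨w, B(s) w⟩ ≥ γ ‖R(s) w‖²` there.  If `Δt > 0` and `ρ ∈ (0,1)` is such that
`Re δ(ζ) ≥ σ Δt` for `|ζ| ≤ ρ`, and `Bₙ, Rₙ` are the convolution quadrature
weights, i.e. `B(δ(ζ)/Δt) = Σ Bₙ ζⁿ` and `R(δ(ζ)/Δt) = Σ Rₙ ζⁿ`, then for every
finitely supported `w : ℕ → V`,
`Σₙ ρ^{2n} Re ⟨wₙ, Σ_{j≤n} B_{n-j} w_j⟩ ≥ γ Σₙ ρ^{2n} ‖Σ_{j≤n} R_{n-j} w_j‖²`. -/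
theorem convolution_quadrature_preserves_positivity
    {V : Type*} [NormedAddCommGroup V] [InnerProductSpace ℂ V] [CompleteSpace V]
    (σ M μ γ : ℝ) (hσ : 0 < σ) (hM : 0 < M) (hμ : 0 ≤ μ) (hγ : 0 ≤ γ)
    (Bop Rop : ℂ → (V →L[ℂ] V))
    (hBanal : ∀ s : ℂ, σ ≤ s.re → AnalyticAt ℂ Bop s)
    (hRanal : ∀ s : ℂ, σ ≤ s.re → AnalyticAt ℂ Rop s)
    (hBbound : ∀ s : ℂ, σ ≤ s.re → ‖Bop s‖ ≤ M * ‖s‖ ^ μ)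
    (hRbound : ∀ s : ℂ, σ ≤ s.re → ‖Rop s‖ ≤ M * ‖s‖ ^ μ)
    (hpos : ∀ (w : V) (s : ℂ), σ ≤ s.re →
        γ * ‖Rop s w‖ ^ 2 ≤ (inner ℂ w (Bop s w) : ℂ).re)
    (Δt : ℝ) (hΔt : 0 < Δt)
    (ρ : ℝ) (hρ0 : 0 < ρ) (hρ1 : ρ < 1)
    (hρδ : ∀ ζ : ℂ, ‖ζ‖ ≤ ρ → σ * Δt ≤ (bdf2 ζ).re)
    (B R : ℕ → (V →L[ℂ] V))
    (hBw : ∀ ζ : ℂ, ‖ζ‖ ≤ ρ → HasSum (fun n => ζ ^ n • B n) (Bop (bdf2 ζ / Δt)))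
    (hRw : ∀ ζ : ℂ, ‖ζ‖ ≤ ρ → HasSum (fun n => ζ ^ n • R n) (Rop (bdf2 ζ / Δt))) :
    ∀ w : ℕ → V, (∃ N : ℕ, ∀ n, N ≤ n → w n = 0) →
      γ * ∑' n : ℕ, ρ ^ (2 * n) *
          ‖∑ j ∈ Finset.range (n + 1), R (n - j) (w j)‖ ^ 2 ≤
        ∑' n : ℕ, ρ ^ (2 * n) *
          (inner ℂ (w n) (∑ j ∈ Finset.range (n + 1), B (n - j) (w j)) : ℂ).re :=
  convolution_quadrature_preserves_positivity_general σ γ hγ Bop Rop hpos Δt hΔt ρ hρ0 hρδ B R hBw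
    hRw
end

section
/- Let H be a Hilbert space, let t > 0, and let ρ : [0,t] → H be twice continuously differentiable with ρ(0) = 0 and ρ'(0) = 0. Then ∫₀^t ‖ρ(τ)‖² dτ ≤ (t⁴/12) ∫₀^t ‖ρ''(τ)‖² dτ. -/
/-! Since `ρ(0) = ρ'(0) = 0`, Taylor's formula with integral remainder reads
`ρ(τ) = ∫₀^τ (τ - s) ρ''(s) ds`. Cauchy–Schwarz with `∫₀^τ (τ - s)² ds = τ³/3` gives
`‖ρ(τ)‖² ≤ (τ³/3) ∫₀^t ‖ρ''‖²`, and integrating `τ³/3` over `[0, t]` produces `t⁴/12`. -/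

open Set MeasureTheory

theorem sq_integral_mul_le_integral_sq_mul_integral_sq {α : Type*} [MeasurableSpace α]
    {μ : Measure α} {f g : α → ℝ} (hf : MemLp f 2 μ) (hg : MemLp g 2 μ) :
    (∫ a, f a * g a ∂μ) ^ 2 ≤ (∫ a, f a ^ 2 ∂μ) * ∫ a, g a ^ 2 ∂μ := by
  have inner_toLp (u v : α → ℝ) (hu : MemLp u 2 μ) (hv : MemLp v 2 μ) :
      inner ℝ (hu.toLp u) (hv.toLp v) = ∫ a, u a * v a ∂μ := by
    rw [L2.inner_def]
    refine integral_congr_ae ?_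
    filter_upwards [hu.coeFn_toLp, hv.coeFn_toLp] with a hua hva
    rw [hua, hva, real_inner_eq_re_inner, RCLike.inner_apply]
    simp [mul_comm]
  have := real_inner_mul_inner_self_le (hf.toLp f) (hg.toLp g)
  simpa only [inner_toLp, sq] using this

theorem sq_intervalIntegral_mul_le {f g : ℝ → ℝ} {a b : ℝ} (hab : a ≤ b)
    (hf : ContinuousOn f (Icc a b)) (hg : ContinuousOn g (Icc a b)) :
    (∫ x in a..b, f x * g x) ^ 2 ≤ (∫ x in a..b, f x ^ 2) * ∫ x in a..b, g x ^ 2 := by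
  have memLp {u : ℝ → ℝ} (hu : ContinuousOn u (Icc a b)) :
      MemLp u 2 (volume.restrict (Ioc a b)) := by
    refine (memLp_two_iff_integrable_sq ?_).2 ?_
    · exact (hu.mono Ioc_subset_Icc_self).aestronglyMeasurable measurableSet_Ioc
    · exact (hu.pow 2).integrableOn_Icc.mono_set Ioc_subset_Icc_self
  simp only [intervalIntegral.integral_of_le hab]
  exact sq_integral_mul_le_integral_sq_mul_integral_sq (memLp hf) (memLp hg)

section

variable {E : Type*} [NormedAddCommGroup E] [NormedSpace ℝ E] {f : ℝ → E} {a b x : ℝ}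

theorem ContDiffOn.hasDerivAt_derivWithin_Icc {n : WithTop ℕ∞} (hf : ContDiffOn ℝ n f (Icc a b))
    (hn : n ≠ 0) (hx : x ∈ Ioo a b) : HasDerivAt f (derivWithin f (Icc a b) x) x :=
  (hf.differentiableOn hn x (Ioo_subset_Icc_self hx)).hasDerivWithinAt.hasDerivAt
    (Icc_mem_nhds hx.1 hx.2)

theorem norm_integral_sub_smul_sq_le {g : ℝ → E} {a x : ℝ} (hax : a ≤ x)
    (hg : ContinuousOn g (Icc a x)) :
    ‖∫ s in a..x, (x - s) • g s‖ ^ 2 ≤ (x - a) ^ 3 / 3 * ∫ s in a..x, ‖g s‖ ^ 2 := by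
  have hweight : ContinuousOn (fun s ↦ x - s) (Icc a x) := by fun_prop
  have hnorm : ‖∫ s in a..x, (x - s) • g s‖ ≤ ∫ s in a..x, (x - s) * ‖g s‖ := by
    refine intervalIntegral.norm_integral_le_of_norm_le hax (ae_of_all _ fun s hs ↦ ?_) ?_
    · rw [norm_smul, Real.norm_of_nonneg (sub_nonneg.2 hs.2)]
    · exact (hweight.mul hg.norm).intervalIntegrable_of_Icc hax
  have hweight_sq : ∫ s in a..x, (x - s) ^ 2 = (x - a) ^ 3 / 3 := by
    rw [intervalIntegral.integral_comp_sub_left (fun s ↦ s ^ 2), integral_pow]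
    ring
  calc ‖∫ s in a..x, (x - s) • g s‖ ^ 2 ≤ (∫ s in a..x, (x - s) * ‖g s‖) ^ 2 :=
        pow_le_pow_left₀ (norm_nonneg _) hnorm 2
    _ ≤ (∫ s in a..x, (x - s) ^ 2) * ∫ s in a..x, ‖g s‖ ^ 2 :=
        sq_intervalIntegral_mul_le hax hweight hg.norm
    _ = (x - a) ^ 3 / 3 * ∫ s in a..x, ‖g s‖ ^ 2 := by rw [hweight_sq]

variable [CompleteSpace E]

theorem ContDiffOn.eq_add_smul_derivWithin_add_integral (hab : a < b)
    (hf : ContDiffOn ℝ 2 f (Icc a b)) (hx : x ∈ Icc a b) :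
    f x = f a + (x - a) • derivWithin f (Icc a b) a +
      ∫ s in a..x, (x - s) • derivWithin (derivWithin f (Icc a b)) (Icc a b) s := by
  set f' := derivWithin f (Icc a b)
  set f'' := derivWithin f' (Icc a b)
  have hu : UniqueDiffOn ℝ (Icc a b) := uniqueDiffOn_Icc hab
  have hf' : ContDiffOn ℝ 1 f' (Icc a b) := hf.derivWithin hu (by norm_num)
  have hsub : Icc a x ⊆ Icc a b := Icc_subset_Icc_right hx.2
  have hderiv : ∀ s ∈ Ioo a x,
      HasDerivAt (fun s ↦ f s + (x - s) • f' s) ((x - s) • f'' s) s := by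
    intro s hs
    have hs' : s ∈ Ioo a b := ⟨hs.1, hs.2.trans_le hx.2⟩
    refine ((hf.hasDerivAt_derivWithin_Icc two_ne_zero hs').add
      (((hasDerivAt_id' s).const_sub x).smul
        (hf'.hasDerivAt_derivWithin_Icc one_ne_zero hs'))).congr_deriv ?_
    simp only [f']
    module
  have hcont : ContinuousOn (fun s ↦ f s + (x - s) • f' s) (Icc a x) :=
    (hf.continuousOn.mono hsub).add
      ((continuousOn_const.sub continuousOn_id).smul (hf'.continuousOn.mono hsub))
  have hint : IntervalIntegrable (fun s ↦ (x - s) • f'' s) volume a x :=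
    ((continuousOn_const.sub continuousOn_id).smul
      ((hf'.continuousOn_derivWithin hu le_rfl).mono hsub)).intervalIntegrable_of_Icc hx.1
  rw [intervalIntegral.integral_eq_sub_of_hasDeriv_right_of_le hx.1 hcont
    (fun s hs ↦ (hderiv s hs).hasDerivWithinAt) hint]
  simp only [sub_self, zero_smul, add_zero]
  abel

theorem ContDiffOn.norm_sq_le_of_eq_zero_of_derivWithin_eq_zero (hab : a < b)
    (hf : ContDiffOn ℝ 2 f (Icc a b)) (hfa : f a = 0) (hf'a : derivWithin f (Icc a b) a = 0)
    (hx : x ∈ Icc a b) :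
    ‖f x‖ ^ 2 ≤
      (x - a) ^ 3 / 3 * ∫ s in a..b, ‖derivWithin (derivWithin f (Icc a b)) (Icc a b) s‖ ^ 2 := by
  have hf'' : ContinuousOn (derivWithin (derivWithin f (Icc a b)) (Icc a b)) (Icc a b) :=
    (hf.derivWithin (uniqueDiffOn_Icc hab) (m := 1) (by norm_num)).continuousOn_derivWithin
      (uniqueDiffOn_Icc hab) le_rfl
  rw [hf.eq_add_smul_derivWithin_add_integral hab hx, hfa, hf'a, smul_zero, zero_add, zero_add]
  refine (norm_integral_sub_smul_sq_le hx.1 (hf''.mono (Icc_subset_Icc_right hx.2))).trans ?_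
  gcongr
  · have := sub_nonneg.2 hx.1
    positivity
  · exact intervalIntegral.integral_mono_interval le_rfl hx.1 hx.2
      (ae_of_all _ fun _ ↦ sq_nonneg _) ((hf''.norm.pow 2).intervalIntegrable_of_Icc hab.le)

theorem ContDiffOn.integral_norm_sq_le_of_eq_zero_of_derivWithin_eq_zero (hab : a < b)
    (hf : ContDiffOn ℝ 2 f (Icc a b)) (hfa : f a = 0) (hf'a : derivWithin f (Icc a b) a = 0) :
    ∫ x in a..b, ‖f x‖ ^ 2 ≤
      (b - a) ^ 4 / 12 * ∫ s in a..b, ‖derivWithin (derivWithin f (Icc a b)) (Icc a b) s‖ ^ 2 := by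
  set C := ∫ s in a..b, ‖derivWithin (derivWithin f (Icc a b)) (Icc a b) s‖ ^ 2
  have hweight : ∫ x in a..b, (x - a) ^ 3 / 3 * C = (b - a) ^ 4 / 12 * C := by
    rw [intervalIntegral.integral_mul_const, intervalIntegral.integral_div,
      intervalIntegral.integral_comp_sub_right (fun x ↦ x ^ 3), integral_pow]
    ring
  calc ∫ x in a..b, ‖f x‖ ^ 2 ≤ ∫ x in a..b, (x - a) ^ 3 / 3 * C :=
        intervalIntegral.integral_mono_on hab.le
          ((hf.continuousOn.norm.pow 2).intervalIntegrable_of_Icc hab.le)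
          (Continuous.intervalIntegrable (by fun_prop) a b)
          fun x hx ↦ hf.norm_sq_le_of_eq_zero_of_derivWithin_eq_zero hab hfa hf'a hx
    _ = (b - a) ^ 4 / 12 * C := hweight

end

theorem sq_integral_le_of_two_vanishing_derivs_general
    {H : Type*} [NormedAddCommGroup H] [CompleteSpace H] [NormedSpace ℝ H]
    (t : ℝ) (ht : 0 < t) (ρ : ℝ → H)
    (hρ : ContDiffOn ℝ 2 ρ (Icc 0 t))
    (hρ0 : ρ 0 = 0)
    (hρ'0 : derivWithin ρ (Icc 0 t) 0 = 0) :
    ∫ τ in (0:ℝ)..t, ‖ρ τ‖ ^ 2 ≤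
      t ^ 4 / 12 * ∫ τ in (0:ℝ)..t, ‖derivWithin (derivWithin ρ (Icc 0 t)) (Icc 0 t) τ‖ ^ 2 := by
  simpa only [sub_zero] using hρ.integral_norm_sq_le_of_eq_zero_of_derivWithin_eq_zero ht hρ0 hρ'0

/-- if `ρ : [0,t] → H` (H a real or complex Hilbert space) is twice
continuously differentiable with `ρ(0) = 0` and `ρ'(0) = 0`, then
`∫₀ᵗ ‖ρ(τ)‖² dτ ≤ (t⁴/12) ∫₀ᵗ ‖ρ''(τ)‖² dτ`. -/
theorem sq_integral_le_of_two_vanishing_derivs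
    {𝕜 : Type*} [RCLike 𝕜] {H : Type*} [NormedAddCommGroup H]
    [InnerProductSpace 𝕜 H] [CompleteSpace H]
    [NormedSpace ℝ H] [IsScalarTower ℝ 𝕜 H]
    (t : ℝ) (ht : 0 < t) (ρ : ℝ → H)
    (hρ : ContDiffOn ℝ 2 ρ (Icc 0 t))
    (hρ0 : ρ 0 = 0)
    (hρ'0 : derivWithin ρ (Icc 0 t) 0 = 0) :
    ∫ τ in (0:ℝ)..t, ‖ρ τ‖ ^ 2 ≤
      t ^ 4 / 12 * ∫ τ in (0:ℝ)..t, ‖derivWithin (derivWithin ρ (Icc 0 t)) (Icc 0 t) τ‖ ^ 2 :=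
  sq_integral_le_of_two_vanishing_derivs_general t ht ρ hρ hρ0 hρ'0
end
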